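/- arXiv:2405.05181 — 2 statements merged into one kernel-verified Lean document; each statement's English description precedes it below -/
import Mathlib

section
/- Let 0 < A < 1/2 and let f : [0,1] → ℝ be 1-periodic, differentiable on (0,1), with |f'(t)| ≤ K · min(t, 1-t)^{-1-A} for all t ∈ (0,1). Then there is a constant C (depending on A and K) such that the Fourier coefficients satisfy |c_n| ≤ C · |n|^{-1+A} for all nonzero integers n. -/
/-!
Integrating the derivative bound from the midpoint gives `|f t| ≤ B · min(t, 1 - t)^(-A)`.
Split `[0, 1]` at `1/2` and reflect the right half by `t ↦ 1 - t`, so that only a singularity at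
`0` remains, with frequency `ξ = ±2πn`. On `[0, 1/2]` cut at `δ = 1/|ξ|`: on `[0, δ]` the pointwise
bound integrates to `O(δ^(1-A))`; on `[δ, 1/2]` integrating by parts once gains a factor `1/|ξ|`,
against boundary values and a total variation of size `O(δ^(-A))`.
-/

open MeasureTheory intervalIntegral Real

open Set

lemma norm_sub_le_of_norm_deriv_le_deriv {E : Type*} [NormedAddCommGroup E] [NormedSpace ℝ E]
    {f f' : ℝ → E} {G G' : ℝ → ℝ} {a b : ℝ} (hab : a ≤ b)
    (hf : ∀ x ∈ Icc a b, HasDerivAt f (f' x) x) (hG : ∀ x ∈ Icc a b, HasDerivAt G (G' x) x)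
    (bound : ∀ x ∈ Ico a b, ‖f' x‖ ≤ G' x) : ‖f b - f a‖ ≤ G b - G a := by
  have key := image_norm_le_of_norm_deriv_right_le_deriv_boundary' (f := fun x => f x - f a)
    (B := fun x => G x - G a)
    (fun x hx => ((hf x hx).continuousAt.sub continuousAt_const).continuousWithinAt)
    (fun x hx => ((hf x (Ico_subset_Icc_self hx)).sub_const (f a)).hasDerivWithinAt)
    (by simp) (fun x hx => ((hG x hx).continuousAt.sub continuousAt_const).continuousWithinAt)
    (fun x hx => ((hG x (Ico_subset_Icc_self hx)).sub_const (G a)).hasDerivWithinAt) bound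
  exact key ⟨hab, le_rfl⟩

lemma abs_sub_le_of_abs_deriv_le_rpow {g g' : ℝ → ℝ} {K A a b : ℝ} (hA : A ≠ 0) (ha : 0 < a)
    (hab : a ≤ b) (hderiv : ∀ x ∈ Icc a b, HasDerivAt g (g' x) x)
    (hbound : ∀ x ∈ Icc a b, |g' x| ≤ K * x ^ (-1 - A)) :
    |g b - g a| ≤ K / A * (a ^ (-A) - b ^ (-A)) := by
  have hG : ∀ x ∈ Icc a b, HasDerivAt (fun x => -(K / A) * x ^ (-A)) (K * x ^ (-1 - A)) x := by
    intro x hx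
    refine ((hasDerivAt_rpow_const (p := -A) (Or.inl (ha.trans_le hx.1).ne')).const_mul
      (-(K / A))).congr_deriv ?_
    rw [show -A - 1 = -1 - A by ring]
    field_simp
  calc |g b - g a| ≤ -(K / A) * b ^ (-A) - -(K / A) * a ^ (-A) :=
        norm_sub_le_of_norm_deriv_le_deriv hab hderiv hG fun x hx =>
          hbound x (Ico_subset_Icc_self hx)
    _ = K / A * (a ^ (-A) - b ^ (-A)) := by ring

lemma intervalIntegrable_deriv_of_abs_le {f f' M : ℝ → ℝ} {a b : ℝ}
    (hf : ∀ x ∈ uIcc a b, HasDerivAt f (f' x) x) (hM : IntervalIntegrable M volume a b)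
    (bound : ∀ x ∈ uIcc a b, |f' x| ≤ M x) : IntervalIntegrable f' volume a b := by
  refine hM.mono_fun' ((measurable_deriv f).aestronglyMeasurable.congr ?_) ?_
  · exact ae_restrict_of_forall_mem measurableSet_uIoc fun x hx =>
      (hf x (uIoc_subset_uIcc hx)).deriv
  · exact ae_restrict_of_forall_mem measurableSet_uIoc fun x hx => bound x (uIoc_subset_uIcc hx)

lemma intervalIntegrable_of_continuousOn_Ioc_of_norm_le {E : Type*} [NormedAddCommGroup E]
    {f : ℝ → E} {M : ℝ → ℝ} {a b : ℝ} (hab : a ≤ b) (hf : ContinuousOn f (Ioc a b))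
    (hM : IntervalIntegrable M volume a b) (bound : ∀ x ∈ Ioc a b, ‖f x‖ ≤ M x) :
    IntervalIntegrable f volume a b := by
  rw [← uIoc_of_le hab] at hf bound
  exact hM.mono_fun' (hf.aestronglyMeasurable measurableSet_uIoc)
    (ae_restrict_of_forall_mem measurableSet_uIoc bound)

lemma norm_integral_le_of_norm_le_rpow {E : Type*} [NormedAddCommGroup E] [NormedSpace ℝ E]
    {h : ℝ → E} {B A δ : ℝ} (hA : A < 1) (hδ : 0 ≤ δ)
    (bound : ∀ t ∈ Ioc 0 δ, ‖h t‖ ≤ B * t ^ (-A)) :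
    ‖∫ t in 0..δ, h t‖ ≤ B * (δ ^ (1 - A) / (1 - A)) := by
  have hA' : -1 < -A := by linarith
  calc ‖∫ t in 0..δ, h t‖ ≤ ∫ t in 0..δ, B * t ^ (-A) :=
        norm_integral_le_of_norm_le hδ (ae_of_all _ bound)
          ((intervalIntegrable_rpow' hA').const_mul B)
    _ = B * (δ ^ (1 - A) / (1 - A)) := by
        rw [intervalIntegral.integral_const_mul, integral_rpow (Or.inl hA'),
          show -A + 1 = 1 - A by ring, zero_rpow (by linarith), sub_zero]

lemma IntervalIntegrable.ofReal {f : ℝ → ℝ} {a b : ℝ} (hf : IntervalIntegrable f volume a b) :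
    IntervalIntegrable (fun t => (f t : ℂ)) volume a b :=
  intervalIntegrable_iff.2 (intervalIntegrable_iff.1 hf).ofReal

lemma norm_integral_mul_exp_le {u u' : ℝ → ℝ} {a b ξ : ℝ} (hab : a ≤ b) (hξ : ξ ≠ 0)
    (hu : ∀ t ∈ Icc a b, HasDerivAt u (u' t) t) (hu' : IntervalIntegrable u' volume a b) :
    ‖∫ t in a..b, (u t : ℂ) * Complex.exp (ξ * t * Complex.I)‖
      ≤ (|u a| + |u b| + ∫ t in a..b, |u' t|) / |ξ| := by
  set v : ℝ → ℂ := fun t => Complex.exp (ξ * t * Complex.I) / (ξ * Complex.I)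
  have hv : ∀ t, ‖v t‖ = |ξ|⁻¹ := fun t => by
    simp [v, ← Complex.ofReal_mul]
  have hv' : ∀ t : ℝ, HasDerivAt v (Complex.exp (ξ * t * Complex.I)) t := fun t => by
    have hξ' : (ξ : ℂ) ≠ 0 := by exact_mod_cast hξ
    refine ((((hasDerivAt_id (t : ℂ)).comp_ofReal.const_mul (ξ : ℂ)).mul_const
      Complex.I).cexp.div_const _).congr_deriv ?_
    simp only [id]
    field_simp
  rw [← uIcc_of_le hab] at hu
  have he : Continuous fun t : ℝ => Complex.exp (ξ * t * Complex.I) := by fun_prop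
  rw [integral_mul_deriv_eq_deriv_mul (fun t ht => (hu t ht).ofReal_comp) (fun t _ => hv' t)
    hu'.ofReal (he.intervalIntegrable _ _)]
  have hint : ‖∫ t in a..b, (u' t : ℂ) * v t‖ ≤ (∫ t in a..b, |u' t|) / |ξ| := by
    calc ‖∫ t in a..b, (u' t : ℂ) * v t‖ ≤ ∫ t in a..b, ‖(u' t : ℂ) * v t‖ :=
          norm_integral_le_integral_norm hab
      _ = (∫ t in a..b, |u' t|) / |ξ| := by
          simp only [norm_mul, hv, Complex.norm_real, Real.norm_eq_abs, ← div_eq_mul_inv,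
            intervalIntegral.integral_div]
  calc _ ≤ ‖(u b : ℂ) * v b‖ + ‖(u a : ℂ) * v a‖ + ‖∫ t in a..b, (u' t : ℂ) * v t‖ :=
        norm_sub_le_of_le (norm_sub_le _ _) le_rfl
    _ ≤ |u b| / |ξ| + |u a| / |ξ| + (∫ t in a..b, |u' t|) / |ξ| := by
        simp only [norm_mul, hv, Complex.norm_real, Real.norm_eq_abs, ← div_eq_mul_inv]
        gcongr
    _ = _ := by ring

lemma integral_abs_le_of_abs_le_rpow {φ : ℝ → ℝ} {K A a b : ℝ} (hA : A ≠ 0) (ha : 0 < a)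
    (hab : a ≤ b) (hφ : IntervalIntegrable φ volume a b)
    (bound : ∀ x ∈ Icc a b, |φ x| ≤ K * x ^ (-1 - A)) :
    ∫ x in a..b, |φ x| ≤ K / A * (a ^ (-A) - b ^ (-A)) := by
  have h0 : (0 : ℝ) ∉ uIcc a b := by rw [uIcc_of_le hab]; exact fun h => ha.not_ge h.1
  have hr : -1 - A ≠ -1 := by intro h; apply hA; linarith
  calc ∫ x in a..b, |φ x| ≤ ∫ x in a..b, K * x ^ (-1 - A) :=
        integral_mono_on hab hφ.abs ((intervalIntegrable_rpow (Or.inr h0)).const_mul K) bound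
    _ = K / A * (a ^ (-A) - b ^ (-A)) := by
        rw [intervalIntegral.integral_const_mul, integral_rpow (Or.inr ⟨hr, h0⟩),
          show -1 - A + 1 = -A by ring]
        field_simp
        ring

lemma nonneg_of_abs_le_mul_rpow {x K y p : ℝ} (hy : 0 < y) (h : |x| ≤ K * y ^ p) : 0 ≤ K :=
  nonneg_of_mul_nonneg_left ((abs_nonneg x).trans h) (rpow_pos_of_pos hy p)

section OneSided

variable {g g' : ℝ → ℝ} {K A L : ℝ}

lemma abs_le_mul_rpow_of_abs_deriv_le_rpow (hA : 0 < A) (hL : 0 < L)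
    (hderiv : ∀ t ∈ Ioc 0 L, HasDerivAt g (g' t) t)
    (hbound : ∀ t ∈ Ioc 0 L, |g' t| ≤ K * t ^ (-1 - A)) {t : ℝ} (ht : t ∈ Ioc 0 L) :
    |g t| ≤ (|g L| * L ^ A + K / A) * t ^ (-A) := by
  have hK := nonneg_of_abs_le_mul_rpow hL (hbound L ⟨hL, le_rfl⟩)
  have hsub : Icc t L ⊆ Ioc 0 L := fun x hx => ⟨ht.1.trans_le hx.1, hx.2⟩
  have hdiff := abs_sub_le_of_abs_deriv_le_rpow hA.ne' ht.1 ht.2 (fun x hx => hderiv x (hsub hx))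
    (fun x hx => hbound x (hsub hx))
  have hgL : |g L| = |g L| * L ^ A * L ^ (-A) := by
    rw [mul_assoc, ← rpow_add hL, add_neg_cancel, rpow_zero, mul_one]
  have hLt : L ^ (-A) ≤ t ^ (-A) := rpow_le_rpow_of_nonpos ht.1 ht.2 (by linarith)
  calc |g t| ≤ |g L| * L ^ A * L ^ (-A) + K / A * (t ^ (-A) - L ^ (-A)) := by
        linarith [abs_sub_abs_le_abs_sub (g t) (g L), abs_sub_comm (g t) (g L)]
    _ ≤ |g L| * L ^ A * t ^ (-A) + K / A * t ^ (-A) := by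
        gcongr
        linarith [rpow_nonneg hL.le (-A)]
    _ = (|g L| * L ^ A + K / A) * t ^ (-A) := by ring

lemma intervalIntegrable_of_abs_deriv_le_rpow (hA0 : 0 < A) (hA1 : A < 1) (hL : 0 < L)
    (hderiv : ∀ t ∈ Ioc 0 L, HasDerivAt g (g' t) t)
    (hbound : ∀ t ∈ Ioc 0 L, |g' t| ≤ K * t ^ (-1 - A)) : IntervalIntegrable g volume 0 L :=
  intervalIntegrable_of_continuousOn_Ioc_of_norm_le hL.le
    (fun t ht => (hderiv t ht).continuousAt.continuousWithinAt)
    ((intervalIntegrable_rpow' (by linarith)).const_mul _)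
    (fun _ ht => abs_le_mul_rpow_of_abs_deriv_le_rpow hA0 hL hderiv hbound ht)

lemma norm_integral_mul_exp_le_of_abs_deriv_le_rpow (hA : 0 < A)
    (hderiv : ∀ t ∈ Ioc 0 L, HasDerivAt g (g' t) t)
    (hbound : ∀ t ∈ Ioc 0 L, |g' t| ≤ K * t ^ (-1 - A)) {δ ξ : ℝ} (hδ0 : 0 < δ) (hδL : δ ≤ L)
    (hξ : ξ ≠ 0) :
    ‖∫ t in δ..L, (g t : ℂ) * Complex.exp (ξ * t * Complex.I)‖
      ≤ (2 * (|g L| * L ^ A + K / A) + K / A) * δ ^ (-A) / |ξ| := by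
  have hL := hδ0.trans_le hδL
  have hK := nonneg_of_abs_le_mul_rpow hL (hbound L ⟨hL, le_rfl⟩)
  have hsub : Icc δ L ⊆ Ioc 0 L := fun x hx => ⟨hδ0.trans_le hx.1, hx.2⟩
  have hsub' : uIcc δ L ⊆ Ioc 0 L := by rw [uIcc_of_le hδL]; exact hsub
  have hderiv_int : IntervalIntegrable g' volume δ L :=
    intervalIntegrable_deriv_of_abs_le (fun t ht => hderiv t (hsub' ht))
      ((intervalIntegrable_rpow (Or.inr fun h => lt_irrefl 0 (hsub' h).1)).const_mul K)
      (fun t ht => hbound t (hsub' ht))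
  have hgδ := abs_le_mul_rpow_of_abs_deriv_le_rpow hA hL hderiv hbound ⟨hδ0, hδL⟩
  have hgL : |g L| ≤ (|g L| * L ^ A + K / A) * δ ^ (-A) :=
    (abs_le_mul_rpow_of_abs_deriv_le_rpow hA hL hderiv hbound ⟨hL, le_rfl⟩).trans
      (mul_le_mul_of_nonneg_left (rpow_le_rpow_of_nonpos hδ0 hδL (by linarith)) (by positivity))
  have hg' := integral_abs_le_of_abs_le_rpow hA.ne' hδ0 hδL hderiv_int
    fun t ht => hbound t (hsub ht)
  refine (norm_integral_mul_exp_le hδL hξ (fun t ht => hderiv t (hsub ht)) hderiv_int).trans ?_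
  gcongr
  nlinarith [mul_nonneg (div_nonneg hK hA.le) (rpow_nonneg hL.le (-A))]

theorem exists_norm_integral_mul_exp_le_rpow (hA0 : 0 < A) (hA1 : A < 1) (hL : 0 < L)
    (hderiv : ∀ t ∈ Ioc 0 L, HasDerivAt g (g' t) t)
    (hbound : ∀ t ∈ Ioc 0 L, |g' t| ≤ K * t ^ (-1 - A)) :
    ∃ C, ∀ ξ : ℝ, L⁻¹ ≤ |ξ| →
      ‖∫ t in 0..L, (g t : ℂ) * Complex.exp (ξ * t * Complex.I)‖ ≤ C * |ξ| ^ (A - 1) := by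
  set B := |g L| * L ^ A + K / A
  refine ⟨B / (1 - A) + (2 * B + K / A), fun ξ hξ => ?_⟩
  set δ := |ξ|⁻¹
  have hξ0 : 0 < |ξ| := (inv_pos.2 hL).trans_le hξ
  have hδ0 : 0 < δ := inv_pos.2 hξ0
  have hδL : δ ≤ L := inv_le_of_inv_le₀ hL hξ
  have hδA : δ ^ (1 - A) = |ξ| ^ (A - 1) := by
    rw [inv_rpow hξ0.le, ← rpow_neg hξ0.le, neg_sub]
  have htail : ‖∫ t in 0..δ, (g t : ℂ) * Complex.exp (ξ * t * Complex.I)‖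
      ≤ B * (δ ^ (1 - A) / (1 - A)) := by
    refine norm_integral_le_of_norm_le_rpow hA1 hδ0.le fun t ht => ?_
    rw [norm_mul, ← Complex.ofReal_mul, Complex.norm_exp_ofReal_mul_I, mul_one, Complex.norm_real]
    exact abs_le_mul_rpow_of_abs_deriv_le_rpow hA0 hL hderiv hbound ⟨ht.1, ht.2.trans hδL⟩
  have hmid : ‖∫ t in δ..L, (g t : ℂ) * Complex.exp (ξ * t * Complex.I)‖
      ≤ (2 * B + K / A) * δ ^ (1 - A) := by
    have hδ : δ ^ (1 - A) = δ ^ (-A) / |ξ| := by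
      rw [sub_eq_add_neg, rpow_one_add' hδ0.le (by linarith), div_eq_inv_mul]
    refine (norm_integral_mul_exp_le_of_abs_deriv_le_rpow hA0 hderiv hbound hδ0 hδL
      (abs_pos.1 hξ0)).trans_eq ?_
    rw [hδ]
    ring
  have hint : IntervalIntegrable (fun t => (g t : ℂ) * Complex.exp (ξ * t * Complex.I))
      volume 0 L :=
    (intervalIntegrable_of_abs_deriv_le_rpow hA0 hA1 hL hderiv hbound).ofReal.mul_continuousOn
      (by fun_prop)
  have hδ_mem : δ ∈ uIcc 0 L := by rw [uIcc_of_le hL.le]; exact ⟨hδ0.le, hδL⟩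
  rw [← integral_add_adjacent_intervals (hint.mono_set (uIcc_subset_uIcc_left hδ_mem))
    (hint.mono_set (uIcc_subset_uIcc_right hδ_mem)), ← hδA]
  calc _ ≤ _ := norm_add_le _ _
    _ ≤ B * (δ ^ (1 - A) / (1 - A)) + (2 * B + K / A) * δ ^ (1 - A) := add_le_add htail hmid
    _ = (B / (1 - A) + (2 * B + K / A)) * δ ^ (1 - A) := by ring

end OneSided

lemma integral_mul_exp_eq_add_reflect {f : ℝ → ℝ} (n : ℤ)
    (h₁ : IntervalIntegrable f volume 0 (1 / 2))
    (h₂ : IntervalIntegrable (fun t => f (1 - t)) volume 0 (1 / 2)) :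
    ∫ t in (0:ℝ)..1, (f t : ℂ) * Complex.exp (-2 * π * Complex.I * n * t) =
      (∫ t in (0:ℝ)..1 / 2, (f t : ℂ) * Complex.exp (↑(-2 * π * n) * t * Complex.I)) +
        ∫ t in (0:ℝ)..1 / 2, (f (1 - t) : ℂ) * Complex.exp (↑(2 * π * n) * t * Complex.I) := by
  have he : Continuous fun t : ℝ => Complex.exp (-2 * π * Complex.I * n * t) := by fun_prop
  have h₂' : IntervalIntegrable f volume (1 / 2) 1 := by
    convert (h₂.comp_sub_left 1).symm using 1 <;> norm_num
  rw [← integral_add_adjacent_intervals (h₁.ofReal.mul_continuousOn he.continuousOn)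
    (h₂'.ofReal.mul_continuousOn he.continuousOn)]
  congr 1
  · refine integral_congr fun t _ => ?_
    congr 2
    push_cast
    ring
  · have hreflect : ∀ t : ℝ, Complex.exp (-2 * π * Complex.I * n * ↑(1 - t))
        = Complex.exp (↑(2 * π * n) * t * Complex.I) := fun t => by
      rw [show -2 * π * Complex.I * n * ↑(1 - t)
          = ↑(2 * π * n) * t * Complex.I - n * (2 * π * Complex.I) by push_cast; ring,
        Complex.exp_sub, Complex.exp_int_mul_two_pi_mul_I, div_one]
    simp_rw [← hreflect]
    rw [integral_comp_sub_left (fun t => (f t : ℂ) * Complex.exp (-2 * π * Complex.I * n * t))]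
    norm_num

lemma hasDerivAt_and_abs_deriv_le_of_mem_Ioc_half {f f' : ℝ → ℝ} {K A : ℝ}
    (hderiv : ∀ t ∈ Ioo (0:ℝ) 1, HasDerivAt f (f' t) t)
    (hbound : ∀ t ∈ Ioo (0:ℝ) 1, |f' t| ≤ K * (min t (1 - t)) ^ (-1 - A)) :
    (∀ t ∈ Ioc (0:ℝ) (1 / 2), HasDerivAt f (f' t) t) ∧
      ∀ t ∈ Ioc (0:ℝ) (1 / 2), |f' t| ≤ K * t ^ (-1 - A) := by
  have hmem : ∀ t ∈ Ioc (0:ℝ) (1 / 2), t ∈ Ioo (0:ℝ) 1 := fun t ht => ⟨ht.1, by linarith [ht.2]⟩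
  refine ⟨fun t ht => hderiv t (hmem t ht), fun t ht => ?_⟩
  simpa only [min_eq_left (by linarith [ht.2] : t ≤ 1 - t)] using hbound t (hmem t ht)

lemma hasDerivAt_and_abs_deriv_le_comp_one_sub {f f' : ℝ → ℝ} {K A : ℝ}
    (hderiv : ∀ t ∈ Ioo (0:ℝ) 1, HasDerivAt f (f' t) t)
    (hbound : ∀ t ∈ Ioo (0:ℝ) 1, |f' t| ≤ K * (min t (1 - t)) ^ (-1 - A)) :
    (∀ t ∈ Ioo (0:ℝ) 1, HasDerivAt (fun s => f (1 - s)) (-f' (1 - t)) t) ∧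
      ∀ t ∈ Ioo (0:ℝ) 1, |-f' (1 - t)| ≤ K * (min t (1 - t)) ^ (-1 - A) := by
  have hmem : ∀ t ∈ Ioo (0:ℝ) 1, 1 - t ∈ Ioo (0:ℝ) 1 := fun t ht =>
    ⟨by linarith [ht.2], by linarith [ht.1]⟩
  refine ⟨fun t ht => by simpa using (hderiv (1 - t) (hmem t ht)).comp_const_sub 1 t,
    fun t ht => ?_⟩
  simpa only [abs_neg, sub_sub_cancel, min_comm] using hbound (1 - t) (hmem t ht)

theorem stmt_3_general (A K : ℝ) (hA0 : 0 < A) (hA1 : A < 1 / 2)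
    (f f' : ℝ → ℝ)
    (hderiv : ∀ t ∈ Set.Ioo (0:ℝ) 1, HasDerivAt f (f' t) t)
    (hbound : ∀ t ∈ Set.Ioo (0:ℝ) 1, |f' t| ≤ K * (min t (1 - t)) ^ (-1 - A)) :
    ∃ C : ℝ, ∀ n : ℤ, n ≠ 0 →
      ‖∫ t in (0:ℝ)..1, (f t : ℂ) * Complex.exp (-2 * Real.pi * Complex.I * n * t)‖
        ≤ C * |(n : ℝ)| ^ (-1 + A) := by
  have hA1' : A < 1 := by linarith
  obtain ⟨hdL, hbL⟩ := hasDerivAt_and_abs_deriv_le_of_mem_Ioc_half hderiv hbound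
  obtain ⟨hdR, hbR⟩ := hasDerivAt_and_abs_deriv_le_of_mem_Ioc_half
    (hasDerivAt_and_abs_deriv_le_comp_one_sub hderiv hbound).1
    (hasDerivAt_and_abs_deriv_le_comp_one_sub hderiv hbound).2
  obtain ⟨C₁, hC₁⟩ := exists_norm_integral_mul_exp_le_rpow hA0 hA1' (by norm_num) hdL hbL
  obtain ⟨C₂, hC₂⟩ := exists_norm_integral_mul_exp_le_rpow hA0 hA1' (by norm_num) hdR hbR
  refine ⟨(C₁ + C₂) * (2 * π) ^ (A - 1), fun n hn => ?_⟩
  have hξ : ∀ ξ : ℝ, |ξ| = 2 * π * |(n:ℝ)| →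
      (1 / 2)⁻¹ ≤ |ξ| ∧ |ξ| ^ (A - 1) = (2 * π) ^ (A - 1) * |(n:ℝ)| ^ (-1 + A) := by
    intro ξ hξ
    have hn1 : (1:ℝ) ≤ |(n:ℝ)| := by exact_mod_cast Int.one_le_abs hn
    rw [hξ, mul_rpow (by positivity) (by positivity), show A - 1 = -1 + A by ring]
    exact ⟨by nlinarith [pi_gt_three], rfl⟩
  have hξ₁ := hξ (-2 * π * n) (by simp [abs_mul, abs_of_pos pi_pos])
  have hξ₂ := hξ (2 * π * n) (by simp [abs_mul, abs_of_pos pi_pos])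
  rw [integral_mul_exp_eq_add_reflect n
    (intervalIntegrable_of_abs_deriv_le_rpow hA0 hA1' (by norm_num) hdL hbL)
    (intervalIntegrable_of_abs_deriv_le_rpow hA0 hA1' (by norm_num) hdR hbR)]
  calc _ ≤ _ := norm_add_le _ _
    _ ≤ C₁ * |-2 * π * n| ^ (A - 1) + C₂ * |2 * π * n| ^ (A - 1) :=
        add_le_add (hC₁ _ hξ₁.1) (hC₂ _ hξ₂.1)
    _ = (C₁ + C₂) * (2 * π) ^ (A - 1) * |(n:ℝ)| ^ (-1 + A) := by
        rw [hξ₁.2, hξ₂.2]; ring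

theorem stmt_3 (A K : ℝ) (hA0 : 0 < A) (hA1 : A < 1 / 2)
    (f f' : ℝ → ℝ) (hper : Function.Periodic f 1)
    (hderiv : ∀ t ∈ Set.Ioo (0:ℝ) 1, HasDerivAt f (f' t) t)
    (hbound : ∀ t ∈ Set.Ioo (0:ℝ) 1, |f' t| ≤ K * (min t (1 - t)) ^ (-1 - A))
    (hL2 : MemLp f 2 (MeasureTheory.volume.restrict (Set.Icc (0:ℝ) 1))) :
    ∃ C : ℝ, ∀ n : ℤ, n ≠ 0 →
      ‖∫ t in (0:ℝ)..1, (f t : ℂ) * Complex.exp (-2 * Real.pi * Complex.I * n * t)‖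
        ≤ C * |(n : ℝ)| ^ (-1 + A) :=
  stmt_3_general A K hA0 hA1 f f' hderiv hbound
end

section
/- Let s ≥ 1, and suppose σ²_ℓ ≤ C · 2^{(2A−1)|ℓ|} for all ℓ ∈ ℕ₀^s, where |ℓ| = ℓ_1 + ⋯ + ℓ_s and −1/2 < A < 1/2. Suppose also the gain coefficients satisfy Γ_ℓ ≤ G for all ℓ (uniformly bounded). Then for N = 2^m, (1/N) Σ_{ℓ ∈ ℕ₀^s} Γ_ℓ σ²_ℓ 𝟙{|ℓ| ≥ m} + (1/N) Σ_{|ℓ| < m} Γ_ℓ σ²_ℓ, with Γ_ℓ = 0 for |ℓ| < m − t (for a (t,m,s)-net), is bounded by C' · N^{2A−2} (log N)^{s−1}. -/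
/-!
Each term is at most `G · max C 0 · r ^ |ℓ|` with `r = 2 ^ (2A - 1) < 1`, and only `|ℓ| ≥ K = m - t`
contributes. A tuple is determined by its tail and its sum, so at most `(L + 1) ^ (s - 1)` tuples
have `|ℓ| = L`; together with `L + 1 ≤ (K + 1)(L - K + 1)` this bounds the sum by
`(K + 1) ^ (s - 1) r ^ K ∑ⱼ (j + 1) ^ (s - 1) r ^ j`. Finally `r ^ K / 2 ^ m ≤ r⁻ᵗ (2 ^ m) ^ (2A - 2)`
and `K + 1 ≤ 2m = (2 / log 2) log 2 ^ m`.
-/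

open Finset

theorem Finset.Nat.card_antidiagonalTuple_le (k L : ℕ) :
    #(Nat.antidiagonalTuple k L) ≤ (L + 1) ^ (k - 1) := by
  cases k with
  | zero => simpa using Finset.card_le_univ (Nat.antidiagonalTuple 0 L)
  | succ k =>
    calc #(Nat.antidiagonalTuple (k + 1) L)
        ≤ #(Fintype.piFinset fun _ : Fin k => range (L + 1)) := by
          refine card_le_card_of_injOn Fin.tail (fun l hl => ?_) fun a ha b hb hab => ?_
          · simp only [mem_coe, Fintype.mem_piFinset, mem_range, Nat.lt_succ_iff]
            intro i
            rw [mem_coe, Nat.mem_antidiagonalTuple] at hl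
            exact hl ▸ single_le_sum (f := l) (fun _ _ => Nat.zero_le _) (mem_univ i.succ)
          · rw [mem_coe, Nat.mem_antidiagonalTuple, Fin.sum_univ_succ] at ha hb
            have hhead : a 0 = b 0 := by
              have : ∑ i : Fin k, a i.succ = ∑ i : Fin k, b i.succ := by
                simp only [← Fin.tail_def, hab]
              omega
            rw [← Fin.cons_self_tail a, ← Fin.cons_self_tail b, hhead, hab]
      _ = (L + 1) ^ k := by simp

theorem card_filter_sum_eq_le {s : ℕ} (F : Finset (Fin s → ℕ)) (L : ℕ) :
    #{l ∈ F | ∑ i, l i = L} ≤ (L + 1) ^ (s - 1) :=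
  (card_le_card fun _ hl => Nat.mem_antidiagonalTuple.2 (mem_filter.1 hl).2).trans
    (Nat.card_antidiagonalTuple_le s L)

theorem summable_add_one_pow_mul_geometric_of_norm_lt_one {r : ℝ} (hr : ‖r‖ < 1) (k : ℕ) :
    Summable fun j : ℕ => ((j : ℝ) + 1) ^ k * r ^ j := by
  have := summable_sum fun m (_ : m ∈ range (k + 1)) =>
    (summable_pow_mul_geometric_of_norm_lt_one m hr).mul_left (k.choose m : ℝ)
  refine this.congr fun j => ?_
  rw [add_pow, sum_mul]
  refine sum_congr rfl fun m _ => ?_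
  ring

section TailSums

variable {r : ℝ} {k K : ℕ}

theorem sum_add_one_pow_mul_pow_le (hr0 : 0 ≤ r) (hr1 : r < 1) {T : Finset ℕ}
    (hT : ∀ L ∈ T, K ≤ L) :
    ∑ L ∈ T, ((L : ℝ) + 1) ^ k * r ^ L ≤
      ((K : ℝ) + 1) ^ k * r ^ K * ∑' j : ℕ, ((j : ℝ) + 1) ^ k * r ^ j := by
  have hsum :=
    summable_add_one_pow_mul_geometric_of_norm_lt_one (by rwa [Real.norm_of_nonneg hr0]) k
  have hinj : Set.InjOn (· - K) T := fun x hx y hy h => by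
    have := hT x hx; have := hT y hy; simp only at h; omega
  calc ∑ L ∈ T, ((L : ℝ) + 1) ^ k * r ^ L
      ≤ ∑ L ∈ T, ((K : ℝ) + 1) ^ k * r ^ K * (((L - K : ℕ) + 1) ^ k * r ^ (L - K)) := by
        refine sum_le_sum fun L hL => ?_
        obtain ⟨j, rfl⟩ := Nat.exists_eq_add_of_le (hT L hL)
        have hsplit : ((K + j : ℕ) : ℝ) + 1 ≤ ((K : ℝ) + 1) * ((j : ℝ) + 1) := by
          push_cast; nlinarith [(K.cast_nonneg : (0 : ℝ) ≤ K), (j.cast_nonneg : (0 : ℝ) ≤ j)]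
        calc (((K + j : ℕ) : ℝ) + 1) ^ k * r ^ (K + j)
            ≤ (((K : ℝ) + 1) * ((j : ℝ) + 1)) ^ k * r ^ (K + j) := by gcongr
          _ = _ := by rw [Nat.add_sub_cancel_left, mul_pow, pow_add]; ring
    _ = ((K : ℝ) + 1) ^ k * r ^ K * ∑ j ∈ T.image (· - K), ((j : ℝ) + 1) ^ k * r ^ j := by
        rw [mul_sum, sum_image hinj]
    _ ≤ _ := by
        gcongr
        exact hsum.sum_le_tsum _ fun j _ => by positivity

theorem sum_filter_pow_sum_le {s : ℕ} (hr0 : 0 ≤ r) (hr1 : r < 1)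
    (F : Finset (Fin s → ℕ)) :
    ∑ l ∈ F with K ≤ ∑ i, l i, r ^ ∑ i, l i ≤
      ((K : ℝ) + 1) ^ (s - 1) * r ^ K * ∑' j : ℕ, ((j : ℝ) + 1) ^ (s - 1) * r ^ j := by
  rw [sum_comp (r ^ ·) (fun l : Fin s → ℕ => ∑ i, l i)]
  calc _ ≤ ∑ L ∈ image (fun l : Fin s → ℕ => ∑ i, l i) {l ∈ F | K ≤ ∑ i, l i},
          ((L : ℝ) + 1) ^ (s - 1) * r ^ L := by
        refine sum_le_sum fun L _ => ?_
        rw [nsmul_eq_mul]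
        gcongr
        exact_mod_cast (card_le_card (filter_subset_filter _ (filter_subset _ F))).trans
          (card_filter_sum_eq_le F L)
    _ ≤ _ := sum_add_one_pow_mul_pow_le hr0 hr1 fun L hL => by
        obtain ⟨l, hl, rfl⟩ := mem_image.1 hL
        exact (mem_filter.1 hl).2

theorem tsum_le_of_le_pow_sum {s : ℕ} (hr0 : 0 ≤ r) (hr1 : r < 1) {B : ℝ} (hB : 0 ≤ B)
    {f : (Fin s → ℕ) → ℝ} (hf : ∀ l, f l ≤ B * r ^ ∑ i, l i)
    (hf0 : ∀ l, ∑ i, l i < K → f l = 0) :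
    ∑' l, f l ≤
      B * (((K : ℝ) + 1) ^ (s - 1) * r ^ K * ∑' j : ℕ, ((j : ℝ) + 1) ^ (s - 1) * r ^ j) := by
  refine tsum_le_of_sum_le' (by positivity) fun F => ?_
  rw [← sum_filter_of_ne fun l _ hl => not_lt.1 fun h => hl (hf0 l h)]
  calc _ ≤ ∑ l ∈ F with K ≤ ∑ i, l i, B * r ^ ∑ i, l i := sum_le_sum fun l _ => hf l
    _ ≤ _ := by
        rw [← mul_sum]
        exact mul_le_mul_of_nonneg_left (sum_filter_pow_sum_le hr0 hr1 F) hB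

end TailSums

theorem pow_sub_le_inv_pow_mul_pow {r : ℝ} (hr0 : 0 < r) (hr1 : r ≤ 1) (m t : ℕ) :
    r ^ (m - t) ≤ r⁻¹ ^ t * r ^ m := by
  rw [inv_pow, inv_mul_eq_div, le_div_iff₀ (by positivity), ← pow_add]
  exact pow_le_pow_of_le_one hr0.le hr1 (by omega)

theorem add_one_pow_mul_two_rpow_pow_div_le {a : ℝ} (ha : a ≤ 0) {m : ℕ} (hm : 1 ≤ m) (t k : ℕ) :
    (((m - t : ℕ) : ℝ) + 1) ^ k * ((2 : ℝ) ^ a) ^ (m - t) / 2 ^ m ≤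
      ((2 : ℝ) ^ a)⁻¹ ^ t * (2 / Real.log 2) ^ k *
        ((2 : ℝ) ^ m) ^ (a - 1) * Real.log ((2 : ℝ) ^ m) ^ k := by
  have hK : ((m - t : ℕ) : ℝ) + 1 ≤ 2 * m := by
    have : (1 : ℝ) ≤ m := by exact_mod_cast hm
    have : ((m - t : ℕ) : ℝ) ≤ m := by exact_mod_cast Nat.sub_le m t
    linarith
  have hgeom := pow_sub_le_inv_pow_mul_pow (r := (2 : ℝ) ^ a) (by positivity)
    (Real.rpow_le_one_of_one_le_of_nonpos one_le_two ha) m t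
  calc _ ≤ (2 * m : ℝ) ^ k * (((2 : ℝ) ^ a)⁻¹ ^ t * ((2 : ℝ) ^ a) ^ m) / 2 ^ m := by gcongr
    _ = _ := by
      rw [Real.rpow_sub_one (by positivity), ← Real.rpow_pow_comm zero_le_two, Real.log_pow]
      have hlog : (2 * m : ℝ) = 2 / Real.log 2 * (m * Real.log 2) := by
        field_simp [(Real.log_pos one_lt_two).ne']
      rw [hlog, mul_pow]
      ring

theorem stmt_14_general (s : ℕ) (A C G : ℝ) (hA1 : A < 1 / 2)
    (t : ℕ) (σ2 : (Fin s → ℕ) → ℝ)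
    (hσ : ∀ l : Fin s → ℕ, σ2 l ≤ C * (2 : ℝ) ^ ((2 * A - 1) * (∑ j, (l j : ℝ)))) :
    ∃ C' : ℝ, ∀ m : ℕ, 1 ≤ m → ∀ Γ : (Fin s → ℕ) → ℝ,
      (∀ l, 0 ≤ Γ l) → (∀ l, Γ l ≤ G) →
      (∀ l : Fin s → ℕ, (∑ j, l j) < m - t → Γ l = 0) →
      (1 / (2 : ℝ) ^ m) * (∑' l : Fin s → ℕ, Γ l * σ2 l) ≤
        C' * ((2 : ℝ) ^ m) ^ (2 * A - 2) * (Real.log ((2 : ℝ) ^ m)) ^ (s - 1) := by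
  set r : ℝ := (2 : ℝ) ^ (2 * A - 1) with hr
  have hr1 : r < 1 := Real.rpow_lt_one_of_one_lt_of_neg one_lt_two (by linarith)
  have hσr (l : Fin s → ℕ) : σ2 l ≤ max C 0 * r ^ ∑ i, l i := (hσ l).trans <| by
    rw [← Nat.cast_sum, Real.rpow_mul_natCast zero_le_two]
    gcongr
    exact le_max_left C 0
  set D := ∑' j : ℕ, ((j : ℝ) + 1) ^ (s - 1) * r ^ j
  refine ⟨G * max C 0 * D * (r⁻¹ ^ t * (2 / Real.log 2) ^ (s - 1)),
    fun m hm Γ hΓ0 hΓG hΓ => ?_⟩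
  have hG : 0 ≤ G := (hΓ0 0).trans (hΓG 0)
  have hterm (l : Fin s → ℕ) : Γ l * σ2 l ≤ G * max C 0 * r ^ ∑ i, l i :=
    calc Γ l * σ2 l ≤ Γ l * (max C 0 * r ^ ∑ i, l i) := mul_le_mul_of_nonneg_left (hσr l) (hΓ0 l)
      _ ≤ G * (max C 0 * r ^ ∑ i, l i) := mul_le_mul_of_nonneg_right (hΓG l) (by positivity)
      _ = G * max C 0 * r ^ ∑ i, l i := (mul_assoc _ _ _).symm
  have htsum := tsum_le_of_le_pow_sum (K := m - t) (by positivity) hr1 (by positivity) hterm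
    fun l hl => by rw [hΓ l hl, zero_mul]
  have harith := add_one_pow_mul_two_rpow_pow_div_le (a := 2 * A - 1) (by linarith) hm t (s - 1)
  rw [sub_sub, one_add_one_eq_two, ← hr] at harith
  calc 1 / (2 : ℝ) ^ m * ∑' l, Γ l * σ2 l
      ≤ G * max C 0 * D * ((((m - t : ℕ) : ℝ) + 1) ^ (s - 1) * r ^ (m - t) / 2 ^ m) :=
        (mul_le_mul_of_nonneg_left htsum (by positivity)).trans_eq (by ring)
    _ ≤ _ := (mul_le_mul_of_nonneg_left harith (by positivity)).trans_eq (by ring)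

/-- Variance bound for a scrambled `(t,m,s)`-net in base 2 under the decay
`σ²_ℓ ≤ C · 2^{(2A−1)|ℓ|}` with uniformly bounded gain coefficients vanishing
for `|ℓ| < m − t`. -/
theorem stmt_14 (s : ℕ) (hs : 1 ≤ s) (A C G : ℝ) (hA0 : -(1 / 2) < A) (hA1 : A < 1 / 2)
    (t : ℕ) (σ2 : (Fin s → ℕ) → ℝ)
    (hσ0 : ∀ l, 0 ≤ σ2 l)
    (hσ : ∀ l : Fin s → ℕ, σ2 l ≤ C * (2 : ℝ) ^ ((2 * A - 1) * (∑ j, (l j : ℝ)))) :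
    ∃ C' : ℝ, ∀ m : ℕ, 1 ≤ m → ∀ Γ : (Fin s → ℕ) → ℝ,
      (∀ l, 0 ≤ Γ l) → (∀ l, Γ l ≤ G) →
      (∀ l : Fin s → ℕ, (∑ j, l j) < m - t → Γ l = 0) →
      (1 / (2 : ℝ) ^ m) * (∑' l : Fin s → ℕ, Γ l * σ2 l) ≤
        C' * ((2 : ℝ) ^ m) ^ (2 * A - 2) * (Real.log ((2 : ℝ) ^ m)) ^ (s - 1) :=
  stmt_14_general s A C G hA1 t σ2 hσ
end
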